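/- arXiv:2603.19445 — 4 statements merged into one kernel-verified Lean document; each statement's English description precedes it below -/
import Mathlib

section
/- Let L, Lj, Ri, Rj, Ij be real numbers with L > 0, Lj > 0, Ri > 0, Rj > 0, and 0 ≤ Ij ≤ Rj. If the grouping cost ((L − Lj)/L) / ((Ri + Ij)/(Ri + Rj)) is at most 1, then (Ri + Rj)/L ≥ (Rj − Ij)/Lj. (In FunShare's notation: if GroupingCost(g_i, g_j) ≤ 1, then the maximum sustainable throughput T* of the merged group g_i ∪ g_j is at least the throughput T_{g_j} of group g_j.) -/
theorem funshare_groupingCost_le_one_implies_Tstar_ge_Tgj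
    (L Lj Ri Rj Ij : ℝ)
    (hL : 0 < L) (hLj : 0 < Lj) (hRi : 0 < Ri) (hRj : 0 < Rj)
    (hIj0 : 0 ≤ Ij) (hIjRj : Ij ≤ Rj)
    (hcost : ((L - Lj) / L) / ((Ri + Ij) / (Ri + Rj)) ≤ 1) :
    (Ri + Rj) / L ≥ (Rj - Ij) / Lj := by
  have hD : 0 < (Ri + Ij) / (Ri + Rj) := by positivity
  rw [div_le_one hD, div_le_div_iff₀ hL (by positivity)] at hcost
  rw [ge_iff_le, div_le_div_iff₀ hLj hL]
  nlinarith
end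

section
/- Let L, Li, Ri, Rj, Ii be real numbers with L > 0, Li > 0, Ri > 0, Rj > 0, and 0 ≤ Ii ≤ Ri. If ((L − Li)/L) / ((Rj + Ii)/(Ri + Rj)) ≤ 1, then (Ri + Rj)/L ≥ (Ri − Ii)/Li. (In FunShare's notation: if GroupingCost(g_j, g_i) ≤ 1, then the maximum sustainable throughput T* of the merged group g_i ∪ g_j is at least the throughput T_{g_i} of group g_i.) -/
theorem funshare_groupingCost_le_one_implies_Tstar_ge_Tgi
    (L Li Ri Rj Ii : ℝ)
    (hL : 0 < L) (hLi : 0 < Li) (hRi : 0 < Ri) (hRj : 0 < Rj)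
    (hIi0 : 0 ≤ Ii) (hIiRi : Ii ≤ Ri)
    (hcost : ((L - Li) / L) / ((Rj + Ii) / (Ri + Rj)) ≤ 1) :
    (Ri + Rj) / L ≥ (Ri - Ii) / Li := by
  have hpos : (0:ℝ) < (Rj + Ii) / (Ri + Rj) := by positivity
  rw [div_le_one hpos, div_le_div_iff₀ hL (by positivity)] at hcost
  rw [ge_iff_le, div_le_div_iff₀ hLi hL]
  nlinarith
end

section
/- Let L, Li, Lj, Ri, Rj, Ii, Ij be real numbers with L > 0, Li > 0, Lj > 0, Ri > 0, Rj > 0, 0 ≤ Ii ≤ Ri, and 0 ≤ Ij ≤ Rj. If max( ((L − Lj)/L) / ((Ri + Ij)/(Ri + Rj)), ((L − Li)/L) / ((Rj + Ii)/(Ri + Rj)) ) ≤ 1, then (Ri + Rj)/L ≥ max( (Ri − Ii)/Li, (Rj − Ij)/Lj ). (Paper's Theorem 2, algebraic core: under an accurate load model, linear scalability, and a merging threshold of at most 1, merging two sharing groups whose pairwise grouping costs are both at most 1 yields a merged group whose maximum sustainable throughput is at least each constituent group's throughput, i.e., functional isolation is preserved.) -/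
theorem funshare_merge_preserves_functional_isolation
    (L Li Lj Ri Rj Ii Ij : ℝ)
    (hL : 0 < L) (hLi : 0 < Li) (hLj : 0 < Lj)
    (hRi : 0 < Ri) (hRj : 0 < Rj)
    (hIi0 : 0 ≤ Ii) (hIiRi : Ii ≤ Ri)
    (hIj0 : 0 ≤ Ij) (hIjRj : Ij ≤ Rj)
    (hcost : max (((L - Lj) / L) / ((Ri + Ij) / (Ri + Rj)))
                 (((L - Li) / L) / ((Rj + Ii) / (Ri + Rj))) ≤ 1) :
    (Ri + Rj) / L ≥ max ((Ri - Ii) / Li) ((Rj - Ij) / Lj) := by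
  have hRR : (0:ℝ) < Ri + Rj := by linarith
  have hdi : (0:ℝ) < Ri + Ij := by linarith
  have hdj : (0:ℝ) < Rj + Ii := by linarith
  have h1 := le_trans (le_max_left _ _) hcost
  have h2 := le_trans (le_max_right _ _) hcost
  rw [div_le_one (div_pos hdi hRR), div_le_div_iff₀ hL hRR] at h1
  rw [div_le_one (div_pos hdj hRR), div_le_div_iff₀ hL hRR] at h2
  rw [ge_iff_le, max_le_iff]
  constructor
  · rw [div_le_div_iff₀ hLi hL]; nlinarith
  · rw [div_le_div_iff₀ hLj hL]; nlinarith
end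

section
/- Let MT, L, Li, Lj, Ri, Rj, Ii, Ij be real numbers with MT ≤ 1, L > 0, Li > 0, Lj > 0, Ri > 0, Rj > 0, 0 ≤ Ii ≤ Ri, and 0 ≤ Ij ≤ Rj. If max( ((L − Lj)/L) / ((Ri + Ij)/(Ri + Rj)), ((L − Li)/L) / ((Rj + Ii)/(Ri + Rj)) ) < MT, then (Ri + Rj)/L > max( (Ri − Ii)/Li, (Rj − Ij)/Lj ). (This is the guarantee behind FunShare's merge rule with merge threshold MT ≤ 1: a merge executed by Algorithm 1 strictly preserves each group's throughput.) -/
theorem funshare_merge_threshold_strictly_preserves_throughput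
    (MT L Li Lj Ri Rj Ii Ij : ℝ)
    (hMT : MT ≤ 1)
    (hL : 0 < L) (hLi : 0 < Li) (hLj : 0 < Lj)
    (hRi : 0 < Ri) (hRj : 0 < Rj)
    (hIi0 : 0 ≤ Ii) (hIiRi : Ii ≤ Ri)
    (hIj0 : 0 ≤ Ij) (hIjRj : Ij ≤ Rj)
    (hcost : max (((L - Lj) / L) / ((Ri + Ij) / (Ri + Rj)))
                 (((L - Li) / L) / ((Rj + Ii) / (Ri + Rj))) < MT) :
    (Ri + Rj) / L > max ((Ri - Ii) / Li) ((Rj - Ij) / Lj) := by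
  have h1 := (max_lt_iff.mp hcost).1
  have h2 := (max_lt_iff.mp hcost).2
  have hD1 : 0 < (Ri + Ij) / (Ri + Rj) := by positivity
  have hD2 : 0 < (Rj + Ii) / (Ri + Rj) := by positivity
  have e1 : (L - Lj)/L < (Ri + Ij)/(Ri + Rj) := by
    have := lt_of_lt_of_le h1 hMT
    rwa [div_lt_one hD1] at this
  have e2 : (L - Li)/L < (Rj + Ii)/(Ri + Rj) := by
    have := lt_of_lt_of_le h2 hMT
    rwa [div_lt_one hD2] at this
  rw [gt_iff_lt, max_lt_iff]
  constructor
  · rw [div_lt_div_iff₀ hLi hL]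
    have := (div_lt_div_iff₀ hL (by positivity : (0:ℝ) < Ri + Rj)).mp e2
    nlinarith
  · rw [div_lt_div_iff₀ hLj hL]
    have := (div_lt_div_iff₀ hL (by positivity : (0:ℝ) < Ri + Rj)).mp e1
    nlinarith
end
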